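/- arXiv:1304.7065 — 2 statements merged into one kernel-verified Lean document; each statement's English description precedes it below -/
import Mathlib

section
/- Let f0, f1 be holomorphic on a domain, a = (a0 : a1) ∈ P^1(C) with a0 ≠ 0, set F := a0·f1 − a1·f0, and let z0 be a zero of F with f0(z0) ≠ 0. Then the Wronskian W(f0,f1) = f0·f1' − f1·f0' vanishes at z0 to order exactly ν_F(z0) − 1, where ν_F(z0) is the order of the zero of F at z0. -/
/-!
Since `W(f₀, f₀) = 0`, bilinearity gives `a₀ · W(f₀, f₁) = W(f₀, F) = f₀ F' - F f₀'`. As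
`f₀(z₀) ≠ 0`, the term `f₀ F'` vanishes at `z₀` to order exactly `ν_F(z₀) - 1`, while `F f₀'`
vanishes to order at least `ν_F(z₀)`; the lower order wins.
-/

open Topology

section

variable {𝕜 : Type*} [NontriviallyNormedField 𝕜] {z₀ : 𝕜}

theorem analyticOrderAt_const_mul {f : 𝕜 → 𝕜} {a : 𝕜} (ha : a ≠ 0) :
    analyticOrderAt (fun z => a * f z) z₀ = analyticOrderAt f z₀ := by
  by_cases hf : AnalyticAt 𝕜 f z₀
  · rw [show (fun z => a * f z) = (fun _ => a) * f from rfl,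
      analyticOrderAt_mul analyticAt_const hf,
      analyticAt_const.analyticOrderAt_eq_zero.mpr ha, zero_add]
  · have haf : ¬ AnalyticAt 𝕜 (fun z => a * f z) z₀ := fun h =>
      hf (by simpa [inv_mul_cancel_left₀ ha] using (analyticAt_const (v := a⁻¹)).fun_mul h)
    rw [analyticOrderAt_of_not_analyticAt hf, analyticOrderAt_of_not_analyticAt haf]

noncomputable def wronskian (f g : 𝕜 → 𝕜) : 𝕜 → 𝕜 := fun z => f z * deriv g z - g z * deriv f z

theorem wronskian_const_mul_sub_const_mul {f g : 𝕜 → 𝕜} {z : 𝕜} (a b : 𝕜)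
    (hf : DifferentiableAt 𝕜 f z) (hg : DifferentiableAt 𝕜 g z) :
    wronskian f (fun w => a * g w - b * f w) z = a * wronskian f g z := by
  simp only [wronskian, deriv_fun_sub (hg.const_mul a) (hf.const_mul b),
    deriv_const_mul_field']
  ring

theorem analyticOrderAt_wronskian_of_ne_zero [CharZero 𝕜] [CompleteSpace 𝕜] {f F : 𝕜 → 𝕜}
    (hf : AnalyticAt 𝕜 f z₀) (hF : AnalyticAt 𝕜 F z₀) (hfz₀ : f z₀ ≠ 0) {n : ℕ}
    (hord : analyticOrderAt F z₀ = n + 1) :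
    analyticOrderAt (wronskian f F) z₀ = n := by
  have hlead : analyticOrderAt (f * deriv F) z₀ = n := by
    rw [analyticOrderAt_mul hf hF.deriv, hf.analyticOrderAt_eq_zero.mpr hfz₀, zero_add,
      analyticOrderAt_deriv_of_pos hF hord]
  have htail : analyticOrderAt (F * deriv f) z₀ = n + 1 + analyticOrderAt (deriv f) z₀ := by
    rw [analyticOrderAt_mul hF hf.deriv, hord]
  have hlt : analyticOrderAt (f * deriv F) z₀ < analyticOrderAt (-(F * deriv f)) z₀ := by
    rw [analyticOrderAt_neg, hlead, htail]
    exact (ENat.lt_add_one_iff (ENat.natCast_ne_top n)).mpr le_rfl |>.trans_le le_self_add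
  rw [← hlead, ← analyticOrderAt_add_eq_left_of_lt hlt]
  congr 1
  ext z
  simp [wronskian, sub_eq_add_neg]

end

theorem wronskian_order_at_zero_general (Ω : Set ℂ) (f₀ f₁ : ℂ → ℂ)
    (hf₀ : AnalyticOnNhd ℂ f₀ Ω) (hf₁ : AnalyticOnNhd ℂ f₁ Ω)
    (a₀ a₁ : ℂ) (ha₀ : a₀ ≠ 0) (z₀ : ℂ) (hz₀ : z₀ ∈ Ω)
    (hf₀z₀ : f₀ z₀ ≠ 0)
    (n : ℕ) (hn : 1 ≤ n) (hord : analyticOrderAt (fun z => a₀ * f₁ z - a₁ * f₀ z) z₀ = (n : ℕ∞)) :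
    analyticOrderAt (fun z => f₀ z * deriv f₁ z - f₁ z * deriv f₀ z) z₀ = ((n - 1 : ℕ) : ℕ∞) := by
  have hf₀a := hf₀ z₀ hz₀
  have hf₁a := hf₁ z₀ hz₀
  obtain ⟨m, rfl⟩ : ∃ m, n = m + 1 := ⟨n - 1, by omega⟩
  have hFa : AnalyticAt ℂ (fun z => a₀ * f₁ z - a₁ * f₀ z) z₀ :=
    (analyticAt_const.fun_mul hf₁a).fun_sub (analyticAt_const.fun_mul hf₀a)
  have hW : wronskian f₀ (fun z => a₀ * f₁ z - a₁ * f₀ z) =ᶠ[𝓝 z₀]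
      fun z => a₀ * wronskian f₀ f₁ z := by
    filter_upwards [hf₀a.eventually_analyticAt, hf₁a.eventually_analyticAt] with z h₀ h₁
    exact wronskian_const_mul_sub_const_mul a₀ a₁ h₀.differentiableAt h₁.differentiableAt
  have hWF := analyticOrderAt_wronskian_of_ne_zero hf₀a hFa hf₀z₀ (by exact_mod_cast hord)
  rw [analyticOrderAt_congr hW, analyticOrderAt_const_mul ha₀] at hWF
  rw [Nat.add_sub_cancel]
  exact hWF

/-- If `F := a0·f1 - a1·f0` (with `a0 ≠ 0`) has a zero of order `n ≥ 1` at `z0` and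
`f0(z0) ≠ 0`, then the Wronskian `W(f0,f1) = f0·f1' - f1·f0'` vanishes at `z0` to
order exactly `n - 1`. -/
theorem wronskian_order_at_zero (Ω : Set ℂ) (hΩ : IsOpen Ω) (f₀ f₁ : ℂ → ℂ)
    (hf₀ : AnalyticOnNhd ℂ f₀ Ω) (hf₁ : AnalyticOnNhd ℂ f₁ Ω)
    (hred : ∀ z ∈ Ω, f₀ z ≠ 0 ∨ f₁ z ≠ 0)
    (a₀ a₁ : ℂ) (ha₀ : a₀ ≠ 0) (z₀ : ℂ) (hz₀ : z₀ ∈ Ω)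
    (hFz₀ : a₀ * f₁ z₀ - a₁ * f₀ z₀ = 0) (hf₀z₀ : f₀ z₀ ≠ 0)
    (hFa : AnalyticAt ℂ (fun z => a₀ * f₁ z - a₁ * f₀ z) z₀)
    (hWa : AnalyticAt ℂ (fun z => f₀ z * deriv f₁ z - f₁ z * deriv f₀ z) z₀)
    (n : ℕ) (hn : 1 ≤ n) (hord : analyticOrderAt (fun z => a₀ * f₁ z - a₁ * f₀ z) z₀ = (n : ℕ∞)) :
    analyticOrderAt (fun z => f₀ z * deriv f₁ z - f₁ z * deriv f₀ z) z₀ = ((n - 1 : ℕ) : ℕ∞) :=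
  wronskian_order_at_zero_general Ω f₀ f₁ hf₀ hf₁ a₀ a₁ ha₀ z₀ hz₀ hf₀z₀ n hn hord
end

section
/- Let λ : Ω → (0, ∞) be continuous on an open set Ω contained in a disk {z : |z| < r} ⊂ C, and suppose the metric λ²(z)|dz|² on Ω is complete (every divergent path in Ω has infinite length) and flat. Then Ω cannot admit a locally isometric holomorphic covering by C; in particular, under the flatness hypothesis such a complete metric on a bounded planar domain leads to a contradiction via Liouville's theorem applied to the developing map. -/
open MeasureTheory Set

/-- The Laplacian of a function `φ : ℂ → ℝ`, as the sum of the second derivatives in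
the directions `1` and `i`. -/
noncomputable def lap (φ : ℂ → ℝ) (z : ℂ) : ℝ :=
  iteratedFDeriv ℝ 2 φ z ![1, 1] + iteratedFDeriv ℝ 2 φ z ![Complex.I, Complex.I]

/-- A complete flat conformal metric `λ²|dz|²` on a bounded open set `Ω ⊆ {|z| < r}`
admits no locally isometric holomorphic covering `Φ : ℂ → Ω` (Liouville applied to the
developing map yields a contradiction). -/
theorem no_entire_developing_map (r : ℝ) (hr : 0 < r) (Ω : Set ℂ) (hΩopen : IsOpen Ω)
    (hΩsub : Ω ⊆ Metric.ball 0 r) (lam : ℂ → ℝ) (hlam : ContinuousOn lam Ω)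
    (hpos : ∀ z ∈ Ω, 0 < lam z)
    (hflat : ∀ φ : ℂ → ℝ, ContDiff ℝ (⊤ : ℕ∞) φ → HasCompactSupport φ → tsupport φ ⊆ Ω →
      ∫ z : ℂ, Real.log (lam z) * lap φ z = 0)
    (hcomplete : ∀ γ : ℝ → ℂ, ContinuousOn γ (Ico 0 1) →
      DifferentiableOn ℝ γ (Ico 0 1) → (∀ t ∈ Ico (0 : ℝ) 1, γ t ∈ Ω) →
      (∀ K : Set ℂ, IsCompact K → K ⊆ Ω →
        ∃ t₀ ∈ Ico (0 : ℝ) 1, ∀ t, t₀ ≤ t → t < 1 → γ t ∉ K) →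
      ¬ IntegrableOn (fun t => lam (γ t) * ‖deriv γ t‖) (Ico (0 : ℝ) 1)) :
    ¬ ∃ Φ : ℂ → ℂ, Differentiable ℂ Φ ∧ (∀ w, Φ w ∈ Ω) ∧
        ∀ w, lam (Φ w) * ‖deriv Φ w‖ = 1 := by
  rintro ⟨Φ, hdiff, hmem, hiso⟩
  have hbd : Bornology.IsBounded (Set.range Φ) := by
    apply Metric.isBounded_ball.subset
    rintro _ ⟨w, rfl⟩
    exact hΩsub (hmem w)
  have hconst : ∀ w, Φ w = Φ 0 := fun w =>
    hdiff.apply_eq_apply_of_bounded hbd w 0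
  have hderiv : deriv Φ 0 = 0 := by
    have : Φ = fun _ => Φ 0 := funext hconst
    rw [this, deriv_const]
  have := hiso 0
  rw [hderiv] at this
  simp at this
end
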